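/- Let C be a ℂ-linear braided monoidal category and A a commutative rigid monoid object with nonzero dim A. Then the free functor F and the forgetful functor G are two-sided adjoints: in addition to the usual adjunction F ⊣ G, for every V in C and every module X over A there is a bijection, natural in V and X, between Hom_{Mod A}(X, F(V)) and Hom_C(G(X), V), whose forward map sends φ : X ⟶ A ⊗ V to (ε ⊗ id_V) ∘ φ : X ⟶ V. -/

import Mathlib

open CategoryTheory MonoidalCategory Limits

universe v u

variable {C : Type u} [Category.{v} C] [MonoidalCategory C]

/-- The free module `F(V) = A ⊗ V` over a monoid object `A`, with action `μ ⊗ id_V`. -/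
@[simps]
def freeMod (A : Mon C) (V : C) : Mod C A.X where
  X := A.X ⊗ V
  mod :=
  { smul := (α_ A.X A.X V).inv ≫ (A.mon.mul ▷ V)
    one_smul := by
      change _ ▷ _ ≫ _ = (λ_ (A.X ⊗ V)).hom
      rw [associator_inv_naturality_left_assoc, ← comp_whiskerRight, MonObj.one_mul]
      monoidal
    mul_smul := by
      change _ ▷ _ ≫ _ = (α_ _ _ _).hom ≫ _ ◁ _ ≫ _
      simp only [MonoidalCategory.whiskerLeft_comp]
      slice_rhs 3 4 => rw [associator_inv_naturality_middle]
      rw [associator_inv_naturality_left_assoc, ← comp_whiskerRight, MonObj.mul_assoc]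
      simp only [comp_whiskerRight, Category.assoc]
      monoidal }

/-!
Write `e = ε ∘ μ`; the zigzag identities make `i_A` and `e` a self-duality of `A`. Bending `μ`
with `i_A` on either side gives the same map `A ⟶ A ⊗ A` (the Frobenius relation: insert a zag,
move `μ` across by associativity, remove a zig). Consequently, for every module `X` the coaction
`x ↦ Σ i' ⊗ i'' x` is a module map `X ⟶ A ⊗ X`, and contracting with `ε` is a retraction of it
because `(ε ⊗ id) i_A = ι`. The inverse of `φ ↦ (ε ⊗ id_V) ∘ φ` is `f ↦ (id_A ⊗ f) ∘ coaction`;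
that it is a left inverse comes from naturality of the coaction and the zig identity on `A ⊗ V`.
-/

-- lets the coherence tactics see `(freeMod A V).X` as `A.X ⊗ V`
attribute [reducible] freeMod

open MonObj

namespace CategoryTheory

structure IsCopairing {X : C} (e : X ⊗ X ⟶ 𝟙_ C) (i : 𝟙_ C ⟶ X ⊗ X) : Prop where
  zig : (λ_ X).inv ≫ i ▷ X ≫ (α_ X X X).hom ≫ X ◁ e ≫ (ρ_ X).hom = 𝟙 X
  zag : (ρ_ X).inv ≫ X ◁ i ≫ (α_ X X X).inv ≫ e ▷ X ≫ (λ_ X).hom = 𝟙 X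

namespace IsCopairing

section

variable {X : C} {e : X ⊗ X ⟶ 𝟙_ C} {i : 𝟙_ C ⟶ X ⊗ X}

theorem zig' (h : IsCopairing e i) : i ▷ X ⊗≫ X ◁ e = ⊗𝟙.hom :=
  calc _ = (λ_ X).hom ≫ ((λ_ X).inv ≫ i ▷ X ≫ (α_ X X X).hom ≫ X ◁ e ≫ (ρ_ X).hom) ≫
        (ρ_ X).inv := by monoidal
    _ = _ := by rw [h.zig]; monoidal

theorem zag' (h : IsCopairing e i) : X ◁ i ⊗≫ e ▷ X = ⊗𝟙.hom :=
  calc _ = (ρ_ X).hom ≫ ((ρ_ X).inv ≫ X ◁ i ≫ (α_ X X X).inv ≫ e ▷ X ≫ (λ_ X).hom) ≫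
        (λ_ X).inv := by monoidal
    _ = _ := by rw [h.zag]; monoidal

end

variable {A : Mon C} {ε : A.X ⟶ 𝟙_ C} {i : 𝟙_ C ⟶ A.X ⊗ A.X}

theorem frobenius (h : IsCopairing (μ[A.X] ≫ ε) i) :
    (λ_ A.X).inv ≫ i ▷ A.X ≫ (α_ _ _ _).hom ≫ A.X ◁ μ =
      (ρ_ A.X).inv ≫ A.X ◁ i ≫ (α_ _ _ _).inv ≫ μ ▷ A.X :=
  calc _ = 𝟙 _ ⊗≫ i ▷ A.X ⊗≫ A.X ◁ μ[A.X] ⊗≫ A.X ◁ (A.X ◁ i ⊗≫ (μ ≫ ε) ▷ A.X) ⊗≫ 𝟙 _ := by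
        rw [h.zag']; monoidal
    _ = 𝟙 _ ⊗≫ i ▷ A.X ⊗≫ A.X ◁ ((A.X ⊗ A.X) ◁ i ≫ μ ▷ (A.X ⊗ A.X)) ⊗≫
          A.X ◁ (μ ≫ ε) ▷ A.X ⊗≫ 𝟙 _ := by
        rw [whisker_exchange μ i]; monoidal
    _ = 𝟙 _ ⊗≫ ((i ▷ A.X) ▷ 𝟙_ C ≫ ((A.X ⊗ A.X) ⊗ A.X) ◁ i) ⊗≫
          A.X ◁ (μ ▷ A.X ≫ μ ≫ ε) ▷ A.X ⊗≫ 𝟙 _ := by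
        monoidal
    _ = 𝟙 _ ⊗≫ A.X ◁ i ⊗≫ i ▷ A.X ▷ (A.X ⊗ A.X) ⊗≫
          A.X ◁ (A.X ◁ μ ≫ μ ≫ ε) ▷ A.X ⊗≫ 𝟙 _ := by
        rw [← whisker_exchange (i ▷ A.X) i, MonObj.mul_assoc_assoc]; monoidal
    _ = 𝟙 _ ⊗≫ A.X ◁ i ⊗≫ (i ▷ (A.X ⊗ A.X) ≫ (A.X ⊗ A.X) ◁ μ[A.X]) ▷ A.X ⊗≫
          A.X ◁ (μ ≫ ε) ▷ A.X ⊗≫ 𝟙 _ := by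
        monoidal
    _ = 𝟙 _ ⊗≫ A.X ◁ i ⊗≫ μ[A.X] ▷ A.X ⊗≫ (i ▷ A.X ⊗≫ A.X ◁ (μ ≫ ε)) ▷ A.X ⊗≫ 𝟙 _ := by
        rw [← whisker_exchange i μ]; monoidal
    _ = _ := by rw [h.zig']; monoidal

theorem copairing_counit (h : IsCopairing (μ[A.X] ≫ ε) i) :
    i ≫ ε ▷ A.X ≫ (λ_ A.X).hom = η[A.X] :=
  calc _ = i ⊗≫ ((η[A.X] ▷ A.X ≫ μ) ≫ ε) ▷ A.X ⊗≫ 𝟙 _ := by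
        rw [MonObj.one_mul]; monoidal
    _ = 𝟙 _ ⊗≫ (𝟙_ C ◁ i ≫ η[A.X] ▷ (A.X ⊗ A.X)) ⊗≫ (μ[A.X] ≫ ε) ▷ A.X ⊗≫ 𝟙 _ := by
        monoidal
    _ = η[A.X] ⊗≫ (A.X ◁ i ⊗≫ (μ[A.X] ≫ ε) ▷ A.X) ⊗≫ 𝟙 _ := by
        rw [whisker_exchange]; monoidal
    _ = η[A.X] := by rw [h.zag']; monoidal

end IsCopairing

namespace Mod

theorem smul_comp_hom {A : C} [MonObj A] {X Y : Mod C A} (φ : X ⟶ Y) :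
    γ[A, X.X] ≫ φ.hom = A ◁ φ.hom ≫ γ[A, Y.X] :=
  IsModHom.smul_hom

variable {A : Mon C} {ε : A.X ⟶ 𝟙_ C} {i : 𝟙_ C ⟶ A.X ⊗ A.X}

variable (i) in
def coaction (X : Mod C A.X) : X.X ⟶ A.X ⊗ X.X :=
  (λ_ X.X).inv ≫ i ▷ X.X ≫ (α_ _ _ _).hom ≫ A.X ◁ γ[A.X, X.X]

theorem smul_coaction (h : IsCopairing (μ[A.X] ≫ ε) i) (X : Mod C A.X) :
    γ[A.X, X.X] ≫ coaction i X = A.X ◁ coaction i X ≫ (α_ _ _ _).inv ≫ μ ▷ X.X :=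
  calc _ = 𝟙 _ ⊗≫ (i ▷ (A.X ⊗ X.X) ≫ (A.X ⊗ A.X) ◁ γ[A.X, X.X]) ⊗≫ A.X ◁ γ[A.X, X.X] := by
        rw [coaction, ← whisker_exchange]; monoidal
    _ = 𝟙 _ ⊗≫ i ▷ (A.X ⊗ X.X) ⊗≫ A.X ◁ (A.X ◁ γ[A.X, X.X] ≫ γ[A.X, X.X]) := by
        monoidal
    _ = ((λ_ A.X).inv ≫ i ▷ A.X ≫ (α_ _ _ _).hom ≫ A.X ◁ μ) ▷ X.X ⊗≫ A.X ◁ γ[A.X, X.X] := by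
        rw [ModObj.mul_smul_self_flip]; monoidal
    _ = ((ρ_ A.X).inv ≫ A.X ◁ i ≫ (α_ _ _ _).inv ≫ μ ▷ A.X) ▷ X.X ⊗≫ A.X ◁ γ[A.X, X.X] := by
        rw [h.frobenius]
    _ = 𝟙 _ ⊗≫ (A.X ◁ i) ▷ X.X ⊗≫ (μ[A.X] ▷ (A.X ⊗ X.X) ≫ A.X ◁ γ[A.X, X.X]) := by
        monoidal
    _ = 𝟙 _ ⊗≫ (A.X ◁ i) ▷ X.X ⊗≫ ((A.X ⊗ A.X) ◁ γ[A.X, X.X] ≫ μ ▷ X.X) := by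
        rw [← whisker_exchange]
    _ = _ := by
        rw [coaction]; monoidal

def coactionHom (h : IsCopairing (μ[A.X] ≫ ε) i) (X : Mod C A.X) : X ⟶ freeMod A X.X :=
  Hom.mk' (coaction i X) (smul_coaction h X)

theorem coaction_counit (h : IsCopairing (μ[A.X] ≫ ε) i) (X : Mod C A.X) :
    coaction i X ≫ ε ▷ X.X ≫ (λ_ X.X).hom = 𝟙 X.X :=
  calc _ = 𝟙 _ ⊗≫ i ▷ X.X ⊗≫ (A.X ◁ γ[A.X, X.X] ≫ ε ▷ X.X) ⊗≫ 𝟙 _ := by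
        rw [coaction]; monoidal
    _ = 𝟙 _ ⊗≫ (i ≫ ε ▷ A.X ≫ (λ_ A.X).hom) ▷ X.X ⊗≫ γ[A.X, X.X] := by
        rw [whisker_exchange]; monoidal
    _ = 𝟙 _ ⊗≫ (η[A.X] ▷ X.X ≫ γ[A.X, X.X]) := by
        rw [h.copairing_counit]; monoidal
    _ = 𝟙 X.X := by
        rw [ModObj.one_smul_self]; monoidal

theorem hom_comp_coaction {X Y : Mod C A.X} (φ : X ⟶ Y) :
    φ.hom ≫ coaction i Y = coaction i X ≫ A.X ◁ φ.hom :=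
  calc _ = 𝟙 _ ⊗≫ (𝟙_ C ◁ φ.hom ≫ i ▷ Y.X) ⊗≫ A.X ◁ γ[A.X, Y.X] := by
        rw [coaction]; monoidal
    _ = 𝟙 _ ⊗≫ i ▷ X.X ⊗≫ A.X ◁ (A.X ◁ φ.hom ≫ γ[A.X, Y.X]) := by
        rw [whisker_exchange]; monoidal
    _ = _ := by
        rw [← smul_comp_hom, coaction]; monoidal

theorem coaction_freeMod_counit (h : IsCopairing (μ[A.X] ≫ ε) i) (V : C) :
    coaction i (freeMod A V) ≫ A.X ◁ (ε ▷ V ≫ (λ_ V).hom) = 𝟙 (freeMod A V).X :=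
  calc _ = 𝟙 (A.X ⊗ V) ⊗≫ (i ▷ A.X ⊗≫ A.X ◁ (μ ≫ ε)) ▷ V ⊗≫ 𝟙 (A.X ⊗ V) := by
        rw [coaction, freeMod_mod_smul]; monoidal
    _ = 𝟙 _ := by rw [h.zig']; monoidal

def actionHom (X : Mod C A.X) : freeMod A X.X ⟶ X :=
  Hom.mk' γ[A.X, X.X] ((Category.assoc _ _ _).trans (ModObj.mul_smul_self_flip X.X).symm)

end Mod

end CategoryTheory

namespace freeMod

variable (A : Mon C)

def map {V W : C} (g : V ⟶ W) : freeMod A V ⟶ freeMod A W :=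
  Mod.Hom.mk' (A.X ◁ g) <| by
    change ((α_ A.X A.X V).inv ≫ μ ▷ V) ≫ A.X ◁ g = A.X ◁ A.X ◁ g ≫ (α_ A.X A.X W).inv ≫ μ ▷ W
    rw [Category.assoc, ← whisker_exchange, associator_inv_naturality_right_assoc]

def homEquiv (V : C) (X : Mod C A.X) : (freeMod A V ⟶ X) ≃ (V ⟶ X.X) where
  toFun φ := (λ_ V).inv ≫ η ▷ V ≫ φ.hom
  invFun f := map A f ≫ X.actionHom
  left_inv φ := by
    have hφ : (α_ A.X A.X V).inv ≫ μ ▷ V ≫ φ.hom = A.X ◁ φ.hom ≫ γ[A.X, X.X] :=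
      (Category.assoc _ _ _).symm.trans (Mod.smul_comp_hom φ)
    refine Mod.hom_ext _ _ ?_
    calc A.X ◁ ((λ_ V).inv ≫ η ▷ V ≫ φ.hom) ≫ γ[A.X, X.X]
        = 𝟙 _ ⊗≫ A.X ◁ η[A.X] ▷ V ⊗≫ (α_ A.X A.X V).inv ≫ μ ▷ V ≫ φ.hom := by
          rw [hφ]; monoidal
      _ = 𝟙 _ ⊗≫ (A.X ◁ η[A.X] ≫ μ) ▷ V ⊗≫ φ.hom := by monoidal
      _ = φ.hom := by rw [MonObj.mul_one]; monoidal
  right_inv f :=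
    calc (λ_ V).inv ≫ η ▷ V ≫ A.X ◁ f ≫ γ[A.X, X.X]
        = (λ_ V).inv ≫ 𝟙_ C ◁ f ≫ η[A.X] ▷ X.X ≫ γ[A.X, X.X] := by rw [whisker_exchange_assoc]
      _ = f := by rw [ModObj.one_smul_self]; monoidal

variable {A} {ε : A.X ⟶ 𝟙_ C} {i : 𝟙_ C ⟶ A.X ⊗ A.X}

def cofreeHomEquiv (h : IsCopairing (μ[A.X] ≫ ε) i) (V : C) (X : Mod C A.X) :
    (X ⟶ freeMod A V) ≃ (X.X ⟶ V) where
  toFun φ := φ.hom ≫ ε ▷ V ≫ (λ_ V).hom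
  invFun f := Mod.coactionHom h X ≫ map A f
  left_inv φ := Mod.hom_ext _ _ <|
    calc Mod.coaction i X ≫ A.X ◁ (φ.hom ≫ ε ▷ V ≫ (λ_ V).hom)
        = (Mod.coaction i X ≫ A.X ◁ φ.hom) ≫ A.X ◁ (ε ▷ V ≫ (λ_ V).hom) := by simp
      _ = φ.hom := by
        rw [← Mod.hom_comp_coaction, Category.assoc, Mod.coaction_freeMod_counit h,
          Category.comp_id]
  right_inv f :=
    calc (Mod.coaction i X ≫ A.X ◁ f) ≫ ε ▷ V ≫ (λ_ V).hom
        = (Mod.coaction i X ≫ ε ▷ X.X ≫ (λ_ X.X).hom) ≫ f := by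
          simp only [Category.assoc, whisker_exchange_assoc, leftUnitor_naturality]
      _ = f := by rw [Mod.coaction_counit h, Category.id_comp]

end freeMod

theorem free_forget_two_sided_adjoint_general
    (A : Mon C)
    (ε : A.X ⟶ 𝟙_ C)
    (iA : 𝟙_ C ⟶ A.X ⊗ A.X)
    (zig : (λ_ A.X).inv ≫ (iA ▷ A.X) ≫ (α_ A.X A.X A.X).hom ≫ (A.X ◁ (A.mon.mul ≫ ε)) ≫
        (ρ_ A.X).hom = 𝟙 A.X)
    (zag : (ρ_ A.X).inv ≫ (A.X ◁ iA) ≫ (α_ A.X A.X A.X).inv ≫ ((A.mon.mul ≫ ε) ▷ A.X) ≫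
        (λ_ A.X).hom = 𝟙 A.X)
    (V : C) (X : Mod C A.X) :
    -- the usual adjunction `F ⊣ G`: `φ ↦ φ ∘ (ι ⊗ id_V)` is a bijection
    Function.Bijective
        (fun φ : freeMod A V ⟶ X => (λ_ V).inv ≫ (A.mon.one ▷ V) ≫ φ.hom) ∧
      -- the second adjunction `G ⊣ F`: `φ ↦ (ε ⊗ id_V) ∘ φ` is a bijection ...
      Function.Bijective
        (fun φ : X ⟶ freeMod A V => φ.hom ≫ (ε ▷ V) ≫ (λ_ V).hom) ∧
      -- ... natural in `X` ...
      (∀ (X' : Mod C A.X) (h : X' ⟶ X) (φ : X ⟶ freeMod A V),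
          (h ≫ φ).hom ≫ (ε ▷ V) ≫ (λ_ V).hom = h.hom ≫ φ.hom ≫ (ε ▷ V) ≫ (λ_ V).hom) ∧
      -- ... and natural in `V`
      (∀ (V' : C) (g : V ⟶ V') (φ : X ⟶ freeMod A V) (φ' : X ⟶ freeMod A V'),
          φ'.hom = φ.hom ≫ (A.X ◁ g) →
            φ'.hom ≫ (ε ▷ V') ≫ (λ_ V').hom = (φ.hom ≫ (ε ▷ V) ≫ (λ_ V).hom) ≫ g) := by
  have h : IsCopairing (A.mon.mul ≫ ε) iA := ⟨zig, zag⟩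
  refine ⟨(freeMod.homEquiv A V X).bijective, (freeMod.cofreeHomEquiv h V X).bijective,
    fun X' f φ => Category.assoc _ _ _, fun V' g φ φ' hφ => ?_⟩
  rw [hφ]
  simp only [Category.assoc, whisker_exchange_assoc, leftUnitor_naturality]

theorem free_forget_two_sided_adjoint
    [BraidedCategory C] [Preadditive C] [CategoryTheory.Linear ℂ C]
    (A : Mon C) (hcomm : (β_ A.X A.X).hom ≫ A.mon.mul = A.mon.mul)
    (h1 : Module.finrank ℂ (𝟙_ C ⟶ A.X) = 1)
    (ε : A.X ⟶ 𝟙_ C) (hε : A.mon.one ≫ ε = 𝟙 (𝟙_ C))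
    (iA : 𝟙_ C ⟶ A.X ⊗ A.X)
    (zig : (λ_ A.X).inv ≫ (iA ▷ A.X) ≫ (α_ A.X A.X A.X).hom ≫ (A.X ◁ (A.mon.mul ≫ ε)) ≫
        (ρ_ A.X).hom = 𝟙 A.X)
    (zag : (ρ_ A.X).inv ≫ (A.X ◁ iA) ≫ (α_ A.X A.X A.X).inv ≫ ((A.mon.mul ≫ ε) ▷ A.X) ≫
        (λ_ A.X).hom = 𝟙 A.X)
    (d : ℂ) (hd : iA ≫ A.mon.mul ≫ ε = d • 𝟙 (𝟙_ C)) (hd0 : d ≠ 0)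
    (V : C) (X : Mod C A.X) :
    -- the usual adjunction `F ⊣ G`: `φ ↦ φ ∘ (ι ⊗ id_V)` is a bijection
    Function.Bijective
        (fun φ : freeMod A V ⟶ X => (λ_ V).inv ≫ (A.mon.one ▷ V) ≫ φ.hom) ∧
      -- the second adjunction `G ⊣ F`: `φ ↦ (ε ⊗ id_V) ∘ φ` is a bijection ...
      Function.Bijective
        (fun φ : X ⟶ freeMod A V => φ.hom ≫ (ε ▷ V) ≫ (λ_ V).hom) ∧
      -- ... natural in `X` ...
      (∀ (X' : Mod C A.X) (h : X' ⟶ X) (φ : X ⟶ freeMod A V),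
          (h ≫ φ).hom ≫ (ε ▷ V) ≫ (λ_ V).hom = h.hom ≫ φ.hom ≫ (ε ▷ V) ≫ (λ_ V).hom) ∧
      -- ... and natural in `V`
      (∀ (V' : C) (g : V ⟶ V') (φ : X ⟶ freeMod A V) (φ' : X ⟶ freeMod A V'),
          φ'.hom = φ.hom ≫ (A.X ◁ g) →
            φ'.hom ≫ (ε ▷ V') ≫ (λ_ V').hom = (φ.hom ≫ (ε ▷ V) ≫ (λ_ V).hom) ≫ g) :=
  free_forget_two_sided_adjoint_general A ε iA zig zag V X
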